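/- arXiv:0801.4845 — 2 statements merged into one kernel-verified Lean document; each statement's English description precedes it below -/
import Mathlib

section
/- Let F be a family of m subsets of [n] such that for every nonempty Z ⊆ [n] some member of F intersects Z in exactly one element. Then 2^m ≥ n, i.e., m ≥ log₂ n. -/
/-!
Each point `x` has a signature, the set of indices `j` with `x ∈ F j`. Two distinct points with
the same signature meet every `F j` together or not at all, so the pair they form meets every
member of the family in `0` or `2` points. Hence selectivity makes signatures injective, and there
are only `2 ^ m` of them.
-/

open Finset

theorem card_pair_inter_ne_one {α : Type*} [DecidableEq α] {x y : α} (hxy : x ≠ y)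
    {s : Finset α} (hs : x ∈ s ↔ y ∈ s) : ({x, y} ∩ s).card ≠ 1 := by
  by_cases hx : x ∈ s
  · rw [inter_eq_left.mpr (insert_subset hx (singleton_subset_iff.mpr (hs.mp hx))),
      card_pair hxy]
    decide
  · have hy : y ∉ s := mt hs.mpr hx
    rw [disjoint_iff_inter_eq_empty.mp
      (disjoint_insert_left.mpr ⟨hx, disjoint_singleton_left.mpr hy⟩), card_empty]
    decide

theorem injective_signature_of_selective {α ι : Type*} [DecidableEq α] [Fintype ι]
    (F : ι → Finset α) (hF : ∀ Z : Finset α, Z.Nonempty → ∃ j, (Z ∩ F j).card = 1) :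
    Function.Injective fun x : α => ({j | x ∈ F j} : Finset ι) := by
  intro x y hsig
  by_contra hxy
  obtain ⟨j, hj⟩ := hF {x, y} (insert_nonempty x {y})
  have hmem : x ∈ F j ↔ y ∈ F j := by simpa using congrArg (j ∈ ·) hsig
  exact card_pair_inter_ne_one hxy hmem hj

theorem card_le_two_pow_of_selective {α ι : Type*} [Fintype α] [DecidableEq α] [Fintype ι]
    (F : ι → Finset α) (hF : ∀ Z : Finset α, Z.Nonempty → ∃ j, (Z ∩ F j).card = 1) :
    Fintype.card α ≤ 2 ^ Fintype.card ι := by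
  rw [← Fintype.card_finset]
  exact Fintype.card_le_of_injective _ (injective_signature_of_selective F hF)

theorem stmt_4 (n m : ℕ) (F : Fin m → Finset (Fin n))
    (hF : ∀ Z : Finset (Fin n), Z.Nonempty → ∃ j : Fin m, (Z ∩ F j).card = 1) :
    n ≤ 2 ^ m := by
  simpa using card_le_two_pow_of_selective F hF
end

section
/- Let m ≥ 2 and let F₁,...,F_r be subsets of [m] such that for every nonempty Z ⊆ [m] there exists j with |Z ∩ F_j| = 1. If the CMS selective-family lower bound holds (every (m,k)-selective family with m > 2, 2 ≤ k ≤ m/64 has size ≥ (k/24)log₂(m/k)), and m ≥ 128, then r ≥ (⌊m/64⌋/24)·log₂(m/⌊m/64⌋). -/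
theorem stmt_13
    (CMS : ∀ (n k : ℕ) (F : Finset (Finset (Fin n))), 2 < n → 2 ≤ k → k ≤ n / 64 →
      (∀ Z : Finset (Fin n), Z.Nonempty → Z.card ≤ k → ∃ F' ∈ F, (Z ∩ F').card = 1) →
      ((k : ℝ) / 24) * Real.logb 2 ((n : ℝ) / k) ≤ F.card)
    (m r : ℕ) (hm : 128 ≤ m) (F : Fin r → Finset (Fin m))
    (hF : ∀ Z : Finset (Fin m), Z.Nonempty → ∃ j : Fin r, (Z ∩ F j).card = 1) :
    ((m / 64 : ℕ) : ℝ) / 24 * Real.logb 2 ((m : ℝ) / ((m / 64 : ℕ) : ℝ)) ≤ r := by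
  have h := CMS m (m / 64) (Finset.univ.image F)
    (by omega) (by omega) le_rfl
    (fun Z hZ _ => by
      obtain ⟨j, hj⟩ := hF Z hZ
      exact ⟨F j, Finset.mem_image_of_mem F (Finset.mem_univ j), hj⟩)
  refine h.trans ?_
  have := Finset.card_image_le (f := F) (s := Finset.univ)
  simp at this
  exact_mod_cast this
end
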